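/- arXiv:2401.11680 — 2 statements merged into one kernel-verified Lean document; each statement's English description precedes it below -/
import Mathlib

section
/- For any preference order σ ∈ {±1}^n (n ≥ 1), there exists a seating order w with ν(w,σ) = 0; that is, the maître d' can always seat the diners so that no diner is napkinless. Concretely, if σ_1 = +1 then the seating order w = (1,2,…,n) yields no napkinless diners, and if σ_1 = −1 then w = (1,n,n−1,…,2) yields no napkinless diners. -/
namespace Napkin

variable {n q : ℕ}

/-- The napkin to the left of seat `s`; napkin `s` itself is the one to the right of
seat `s`, placed between seats `s` and `s + 1` around the circular table. -/
def leftNapkin (s : Fin n) : Fin n := ⟨((s : ℕ) + (n - 1)) % n, Nat.mod_lt _ s.pos⟩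

/-- Process the diners `0, 1, …, n-1` in their arrival order.  Here `w i = j` means that
diner `j` sits in seat `i` (so diner `j` sits in seat `w.symm j`), and `σ j = true`
means diner `j` prefers the napkin to their right.  Each diner takes their preferred
adjacent napkin if it is unclaimed, otherwise the other adjacent napkin if it is
unclaimed, and otherwise is napkinless.  The returned state consists of the set of
claimed napkins and the set of napkinless diners. -/
def dine (σ : Fin n → Bool) (w : Equiv.Perm (Fin n)) :
    Finset (Fin n) × Finset (Fin n) :=
  (List.finRange n).foldl
    (fun st j =>
      let s := w.symm j
      let pref := if σ j then s else leftNapkin s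
      let other := if σ j then leftNapkin s else s
      if pref ∉ st.1 then (insert pref st.1, st.2)
      else if other ∉ st.1 then (insert other st.1, st.2)
      else (st.1, insert j st.2))
    (∅, ∅)

/-- The set of napkinless diners for the seating arrangement `(w, σ)`. -/
def napkinless (σ : Fin n → Bool) (w : Equiv.Perm (Fin n)) : Finset (Fin n) :=
  (dine σ w).2

/-- `ν(w,σ)`, the number of napkinless diners. -/
def nu (σ : Fin n → Bool) (w : Equiv.Perm (Fin n)) : ℕ := (napkinless σ w).card

/-- A seating order puts diner `1` in seat `1` (index `0` here). -/
def IsSeating (w : Equiv.Perm (Fin n)) : Prop :=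
  ∀ i : Fin n, (i : ℕ) = 0 → (w i : ℕ) = 0

instance : DecidablePred (IsSeating (n := n)) := fun w =>
  decidable_of_iff (∀ i : Fin n, (i : ℕ) = 0 → (w i : ℕ) = 0) Iff.rfl

/-- `ν_max(σ)`, the maximal number of napkinless diners over all seating orders. -/
def nuMax (σ : Fin n → Bool) : ℕ :=
  (Finset.univ.filter fun w : Equiv.Perm (Fin n) => IsSeating w).sup (nu σ)

/-- The value `±1` of a napkin preference. -/
def sign (b : Bool) : ℤ := if b then 1 else -1

/-- The drift `h(σ) = max(0, max over prefixes of σ₁ + ⋯ + σᵢ)`. -/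
def drift (σ : Fin n → Bool) : ℕ :=
  (Finset.range (n + 1)).sup fun i =>
    (∑ j ∈ Finset.univ.filter (fun j : Fin n => (j : ℕ) < i), sign (σ j)).toNat

/-- A bench collection: `q` pairwise disjoint triples `aᵢ < bᵢ < cᵢ` in `{1,…,n}`. -/
structure BenchCollection (n q : ℕ) where
  a : Fin q → Fin n
  b : Fin q → Fin n
  c : Fin q → Fin n
  hab : ∀ i, a i < b i
  hbc : ∀ i, b i < c i
  disj : ∀ i j : Fin q, i ≠ j →
    Disjoint ({a i, b i, c i} : Finset (Fin n)) ({a j, b j, c j} : Finset (Fin n))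

/-- A bench is balanced when its two smallest members have opposite preferences. -/
def Balanced (σ : Fin n → Bool) (β : BenchCollection n q) (i : Fin q) : Prop :=
  sign (σ (β.a i)) + sign (σ (β.b i)) = 0

instance (σ : Fin n → Bool) (β : BenchCollection n q) :
    DecidablePred (Balanced σ β) := fun i =>
  decidable_of_iff (sign (σ (β.a i)) + sign (σ (β.b i)) = 0) Iff.rfl

/-- `b(β,σ)`, the number of balanced benches of `β`. -/
def balance (σ : Fin n → Bool) (β : BenchCollection n q) : ℕ :=
  (Finset.univ.filter fun i => Balanced σ β i).card

private lemma foldl_eq_of_step {α S : Type*} :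
    ∀ (l : List α) (g : ℕ → S) (f : S → α → S),
      (∀ (k : ℕ) (h : k < l.length), f (g k) (l.get ⟨k, h⟩) = g (k + 1)) →
      l.foldl f (g 0) = g l.length
  | [], _, _, _ => rfl
  | a :: t, g, f, hg => by
      have h0 : f (g 0) a = g 1 := hg 0 (Nat.succ_pos _)
      have ih := foldl_eq_of_step t (fun k => g (k + 1)) f
        (fun k h => hg (k + 1) (Nat.succ_lt_succ h))
      simpa [h0] using ih

private lemma dine_eq (σ : Fin n → Bool) (w : Equiv.Perm (Fin n))
    (C : ℕ → Finset (Fin n)) (hC0 : C 0 = ∅)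
    (hstep : ∀ (k : ℕ) (hk : k < n),
      (fun (st : Finset (Fin n) × Finset (Fin n)) (j : Fin n) =>
        let s := w.symm j
        let pref := if σ j then s else leftNapkin s
        let other := if σ j then leftNapkin s else s
        if pref ∉ st.1 then (insert pref st.1, st.2)
        else if other ∉ st.1 then (insert other st.1, st.2)
        else (st.1, insert j st.2)) (C k, ∅) ⟨k, hk⟩ = (C (k + 1), ∅)) :
    dine σ w = (C n, ∅) := by
  unfold dine
  rw [show ((∅ : Finset (Fin n)), (∅ : Finset (Fin n))) = (C 0, ∅) by rw [hC0]]
  have := foldl_eq_of_step (List.finRange n) (fun k => (C k, ∅))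
    (fun (st : Finset (Fin n) × Finset (Fin n)) (j : Fin n) =>
      let s := w.symm j
      let pref := if σ j then s else leftNapkin s
      let other := if σ j then leftNapkin s else s
      if pref ∉ st.1 then (insert pref st.1, st.2)
      else if other ∉ st.1 then (insert other st.1, st.2)
      else (st.1, insert j st.2))
    (fun k h => by
      rw [List.get_finRange]
      exact hstep k (by simpa using h))
  simpa using this

private lemma nu_refl (hn : 1 ≤ n) (σ : Fin n → Bool) (h : σ ⟨0, hn⟩ = true) :
    nu σ (Equiv.refl (Fin n)) = 0 := by
  have hd : dine σ (Equiv.refl (Fin n)) =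
      (Finset.univ.filter (fun m : Fin n => (m : ℕ) < n), ∅) := by
    apply dine_eq σ _ (fun k => Finset.univ.filter (fun m : Fin n => (m : ℕ) < k))
    · ext m; simp
    · intro k hk
      simp only [Equiv.refl_symm, Equiv.refl_apply]
      set j : Fin n := ⟨k, hk⟩ with hj
      have hjC : j ∉ Finset.univ.filter (fun m : Fin n => (m : ℕ) < k) := by
        simp [hj]
      have hins : insert j (Finset.univ.filter (fun m : Fin n => (m : ℕ) < k)) =
          Finset.univ.filter (fun m : Fin n => (m : ℕ) < k + 1) := by
        ext m
        simp only [Finset.mem_insert, Finset.mem_filter, Finset.mem_univ, true_and,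
          Fin.ext_iff, hj]
        omega
      by_cases hσ : σ j = true
      · simp only [hσ, reduceIte]
        rw [if_pos hjC, hins]
      · simp only [Bool.not_eq_true] at hσ
        have hk0 : k ≠ 0 := by
          rintro rfl
          rw [show j = ⟨0, hn⟩ from rfl, h] at hσ
          simp at hσ
        simp only [hσ, Bool.false_eq_true, reduceIte]
        have hlval : ((leftNapkin j : Fin n) : ℕ) = k - 1 := by
          show (k + (n - 1)) % n = k - 1
          rw [show k + (n - 1) = (k - 1) + n by omega, Nat.add_mod_right]
          exact Nat.mod_eq_of_lt (by omega)
        have hlC : leftNapkin j ∈ Finset.univ.filter (fun m : Fin n => (m : ℕ) < k) := by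
          simp only [Finset.mem_filter, Finset.mem_univ, true_and, hlval]
          omega
        rw [if_neg (not_not_intro hlC), if_pos hjC, hins]
  simp [nu, napkinless, hd]

private lemma nu_rev (hn : 1 ≤ n) (σ : Fin n → Bool) (h : σ ⟨0, hn⟩ = false)
    (w : Equiv.Perm (Fin n)) (hw : ∀ i : Fin n, (w i : ℕ) = (n - (i : ℕ)) % n) :
    nu σ w = 0 := by
  have hinv : ∀ i : Fin n, w (w i) = i := by
    intro i
    apply Fin.ext
    rw [hw, hw]
    have hi := i.isLt
    rcases Nat.eq_zero_or_pos (i : ℕ) with h0 | h1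
    · simp [h0, Nat.mod_self]
    · rw [Nat.mod_eq_of_lt (show n - (i : ℕ) < n by omega)]
      rw [show n - (n - (i : ℕ)) = (i : ℕ) by omega]
      exact Nat.mod_eq_of_lt hi
  have hsymm : ∀ j : Fin n, w.symm j = w j := by
    intro j
    rw [Equiv.symm_apply_eq, hinv]
  have hd : dine σ w =
      (Finset.univ.filter (fun m : Fin n => n - n ≤ (m : ℕ)), ∅) := by
    apply dine_eq σ _ (fun k => Finset.univ.filter (fun m : Fin n => n - k ≤ (m : ℕ)))
    · ext m
      have := m.isLt
      simp only [Finset.mem_filter, Finset.mem_univ, true_and,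
        Finset.notMem_empty, iff_false]
      omega
    · intro k hk
      simp only [hsymm]
      set j : Fin n := ⟨k, hk⟩ with hj
      have hsval : ((w j : Fin n) : ℕ) = (n - k) % n := hw j
      have hl : ((leftNapkin (w j) : Fin n) : ℕ) = n - k - 1 := by
        show (((w j : Fin n) : ℕ) + (n - 1)) % n = n - k - 1
        rw [hsval]
        rcases Nat.eq_zero_or_pos k with h0 | h1
        · subst h0
          rw [Nat.sub_zero, Nat.mod_self, Nat.zero_add, Nat.mod_eq_of_lt (by omega)]
        · rw [Nat.mod_eq_of_lt (show n - k < n by omega),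
            show n - k + (n - 1) = (n - k - 1) + n by omega, Nat.add_mod_right,
            Nat.mod_eq_of_lt (by omega)]
      have hins : insert (leftNapkin (w j))
            (Finset.univ.filter (fun m : Fin n => n - k ≤ (m : ℕ))) =
          Finset.univ.filter (fun m : Fin n => n - (k + 1) ≤ (m : ℕ)) := by
        ext m
        have := m.isLt
        simp only [Finset.mem_insert, Finset.mem_filter, Finset.mem_univ, true_and,
          Fin.ext_iff, hl]
        omega
      have hlC : leftNapkin (w j) ∉
          Finset.univ.filter (fun m : Fin n => n - k ≤ (m : ℕ)) := by
        simp only [Finset.mem_filter, Finset.mem_univ, true_and, hl]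
        omega
      rcases Nat.eq_zero_or_pos k with h0 | h1
      · subst h0
        have hσ : σ j = false := by rw [show j = ⟨0, hn⟩ from rfl]; exact h
        simp only [hσ, Bool.false_eq_true, reduceIte]
        rw [if_pos hlC, hins]
      · have hsC : w j ∈ Finset.univ.filter (fun m : Fin n => n - k ≤ (m : ℕ)) := by
          simp only [Finset.mem_filter, Finset.mem_univ, true_and, hsval,
            Nat.mod_eq_of_lt (show n - k < n by omega)]
          exact le_refl _
        by_cases hσ : σ j = true
        · simp only [hσ, reduceIte]
          rw [if_neg (not_not_intro hsC), if_pos hlC, hins]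
        · simp only [Bool.not_eq_true] at hσ
          simp only [hσ, Bool.false_eq_true, reduceIte]
          rw [if_pos hlC, hins]
  simp [nu, napkinless, hd]

def revPerm (n : ℕ) : Equiv.Perm (Fin n) :=
  Function.Involutive.toPerm (fun i => ⟨(n - (i : ℕ)) % n, Nat.mod_lt _ i.pos⟩)
    (by
      intro i
      apply Fin.ext
      show (n - (n - (i : ℕ)) % n) % n = (i : ℕ)
      have hi := i.isLt
      rcases Nat.eq_zero_or_pos (i : ℕ) with h0 | h1
      · simp [h0, Nat.mod_self]
      · rw [Nat.mod_eq_of_lt (show n - (i : ℕ) < n by omega),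
          show n - (n - (i : ℕ)) = (i : ℕ) by omega]
        exact Nat.mod_eq_of_lt hi)

/-- For any preference order there is a seating order with no napkinless
diners; concretely, the identity seating works when `σ₁ = +1` (true), and the
reversal `w = (1, n, n-1, …, 2)` (i.e. `w i = (n - i) mod n` in 0-based indexing)
works when `σ₁ = -1` (false). -/
theorem statement0 (n : ℕ) (hn : 1 ≤ n) (σ : Fin n → Bool) :
    (∃ w : Equiv.Perm (Fin n), IsSeating w ∧ nu σ w = 0) ∧
    (σ ⟨0, hn⟩ = true → nu σ (Equiv.refl (Fin n)) = 0) ∧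
    (σ ⟨0, hn⟩ = false →
      ∀ w : Equiv.Perm (Fin n), (∀ i : Fin n, (w i : ℕ) = (n - (i : ℕ)) % n) →
        nu σ w = 0) := by
  refine ⟨?_, fun h => nu_refl hn σ h, fun h w hw => nu_rev hn σ h w hw⟩
  cases hσ : σ ⟨0, hn⟩ with
  | true =>
      exact ⟨Equiv.refl _, fun i hi => by simpa using hi, nu_refl hn σ hσ⟩
  | false =>
      refine ⟨revPerm n, ?_, nu_rev hn σ hσ (revPerm n) (fun i => rfl)⟩
      intro i hi
      show (n - (i : ℕ)) % n = 0
      rw [hi, Nat.sub_zero, Nat.mod_self]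

end Napkin
end

section
/- Let σ ∈ {±1}^n be the preference order whose entries repeat the pattern (1,−1,1), i.e., σ_j = −1 when j ≡ 2 (mod 3) and σ_j = +1 otherwise. Then ν_max(σ) = ⌊n/3⌋; in particular, the seating order (1,3,2,4,6,5,7,9,8,…) yields napkinless diners exactly in the seats {2, 5, 8, …, 3⌊n/3⌋ − 1}. -/
namespace Napkin

variable {n q : ℕ}

-- auxiliary material

def step (σ : Fin n → Bool) (w : Equiv.Perm (Fin n)) :
    Finset (Fin n) × Finset (Fin n) → Fin n → Finset (Fin n) × Finset (Fin n) :=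
  fun st j =>
    let s := w.symm j
    let pref := if σ j then s else leftNapkin s
    let other := if σ j then leftNapkin s else s
    if pref ∉ st.1 then (insert pref st.1, st.2)
    else if other ∉ st.1 then (insert other st.1, st.2)
    else (st.1, insert j st.2)

lemma dine_eq_foldl (σ : Fin n → Bool) (w : Equiv.Perm (Fin n)) :
    dine σ w = (List.finRange n).foldl (step σ w) (∅, ∅) := rfl

-- count lemma
lemma count_mod3 : ∀ N, ((Finset.range N).filter (fun m => m % 3 = 2)).card = N / 3 := by
  intro N
  induction N with
  | zero => simp
  | succ N ih =>
    rw [Finset.range_add_one, Finset.filter_insert]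
    by_cases h : N % 3 = 2
    · rw [if_pos h, Finset.card_insert_of_notMem (by simp), ih]
      omega
    · rw [if_neg h, ih]
      omega

def Inv (w : Equiv.Perm (Fin n)) (st : Finset (Fin n) × Finset (Fin n))
    (proc : Finset (Fin n)) : Prop :=
  ∃ f : Fin n → Option (Fin n),
    (∀ m, m ∈ st.1 ↔ (f m).isSome) ∧
    (∀ m j, f m = some j → j ∈ proc ∧ (w.symm j = m ∨ leftNapkin (w.symm j) = m)) ∧
    (∀ m m' j, f m = some j → f m' = some j → m = m') ∧
    (∀ j ∈ st.2, j ∈ proc ∧ w.symm j ∈ st.1 ∧ leftNapkin (w.symm j) ∈ st.1 ∧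
      ∀ m, f m ≠ some j)

lemma inv_insert_claim (w : Equiv.Perm (Fin n)) (cl lost proc : Finset (Fin n))
    (j p : Fin n) (hj : j ∉ proc)
    (hp : w.symm j = p ∨ leftNapkin (w.symm j) = p) (hpc : p ∉ cl)
    (h : Inv w (cl, lost) proc) : Inv w (insert p cl, lost) (insert j proc) := by
  obtain ⟨f, hf1, hf2, hf3, hf4⟩ := h
  classical
  refine ⟨Function.update f p (some j), ?_, ?_, ?_, ?_⟩
  · intro m
    by_cases hm : m = p
    · subst hm; simp [Function.update_self]
    · simp only [Function.update_of_ne hm, Finset.mem_insert]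
      simp only [hf1] at *
      tauto
  · intro m j' hm
    by_cases hmp : m = p
    · subst hmp
      rw [Function.update_self] at hm
      obtain rfl : j = j' := by injection hm
      exact ⟨Finset.mem_insert_self _ _, hp⟩
    · rw [Function.update_of_ne hmp] at hm
      exact ⟨Finset.mem_insert_of_mem (hf2 m j' hm).1, (hf2 m j' hm).2⟩
  · intro m m' j' hm hm'
    by_cases hmp : m = p <;> by_cases hmp' : m' = p
    · rw [hmp, hmp']
    · subst hmp
      rw [Function.update_self] at hm
      obtain rfl : j = j' := by injection hm
      rw [Function.update_of_ne hmp'] at hm'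
      exact absurd (hf2 m' j hm').1 hj
    · subst hmp'
      rw [Function.update_self] at hm'
      obtain rfl : j = j' := by injection hm'
      rw [Function.update_of_ne hmp] at hm
      exact absurd (hf2 m j hm).1 hj
    · rw [Function.update_of_ne hmp] at hm
      rw [Function.update_of_ne hmp'] at hm'
      exact hf3 m m' j' hm hm'
  · intro j' hj'
    obtain ⟨h1, h2, h3, h4⟩ := hf4 j' hj'
    refine ⟨Finset.mem_insert_of_mem h1, Finset.mem_insert_of_mem h2,
      Finset.mem_insert_of_mem h3, ?_⟩
    intro m
    by_cases hmp : m = p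
    · subst hmp
      rw [Function.update_self]
      intro hcontra
      obtain rfl : j = j' := by injection hcontra
      exact hj h1
    · rw [Function.update_of_ne hmp]; exact h4 m
  
lemma inv_lost (w : Equiv.Perm (Fin n)) (cl lost proc : Finset (Fin n))
    (j : Fin n) (hj : j ∉ proc)
    (hs : w.symm j ∈ cl) (hl : leftNapkin (w.symm j) ∈ cl)
    (h : Inv w (cl, lost) proc) : Inv w (cl, insert j lost) (insert j proc) := by
  obtain ⟨f, hf1, hf2, hf3, hf4⟩ := h
  refine ⟨f, hf1, ?_, hf3, ?_⟩
  · intro m j' hm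
    exact ⟨Finset.mem_insert_of_mem (hf2 m j' hm).1, (hf2 m j' hm).2⟩
  · intro j' hj'
    rcases Finset.mem_insert.mp hj' with rfl | hj'
    · refine ⟨Finset.mem_insert_self _ _, hs, hl, ?_⟩
      intro m hm
      exact hj (hf2 m j' hm).1
    · obtain ⟨h1, h2, h3, h4⟩ := hf4 j' hj'
      exact ⟨Finset.mem_insert_of_mem h1, h2, h3, h4⟩

lemma foldl_inv {α β : Type*} [DecidableEq α] (step : β → α → β)
    (P : β → Finset α → Prop)
    (hstep : ∀ b s a, a ∉ s → P b s → P (step b a) (insert a s)) :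
    ∀ (l : List α), l.Nodup → ∀ (s : Finset α) (b : β), P b s →
      (∀ a ∈ l, a ∉ s) → P (l.foldl step b) (s ∪ l.toFinset) := by
  intro l
  induction l with
  | nil => intro _ s b hP _; simpa using hP
  | cons a t ih =>
    intro hnd s b hP hfresh
    have ha : a ∉ s := hfresh a (by simp)
    have h1 : P (step b a) (insert a s) := hstep b s a ha hP
    have h2 := ih (List.nodup_cons.mp hnd).2 (insert a s) (step b a) h1
      (fun x hx => by
        simp only [Finset.mem_insert, not_or]
        exact ⟨fun hxa => (List.nodup_cons.mp hnd).1 (hxa ▸ hx), hfresh x (by simp [hx])⟩)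
    simp only [List.foldl_cons]
    convert h2 using 1
    ext x
    simp [or_assoc]

lemma inv_dine (σ : Fin n → Bool) (w : Equiv.Perm (Fin n)) :
    Inv w (dine σ w) Finset.univ := by
  have key := foldl_inv
    (fun (st : Finset (Fin n) × Finset (Fin n)) j =>
      let s := w.symm j
      let pref := if σ j then s else leftNapkin s
      let other := if σ j then leftNapkin s else s
      if pref ∉ st.1 then (insert pref st.1, st.2)
      else if other ∉ st.1 then (insert other st.1, st.2)
      else (st.1, insert j st.2))
    (Inv w)
    ?_ (List.finRange n) (List.nodup_finRange n) ∅ (∅, ∅) ?_ (by simp)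
  · simpa [dine] using key
  · rintro ⟨cl, lost⟩ proc j hj hInv
    simp only []
    set s := w.symm j with hs
    cases hb : σ j <;> simp only [hb, if_true, if_false, Bool.false_eq_true] <;>
      split_ifs with h1 h2 <;>
      first
        | exact inv_insert_claim w cl lost proc j (leftNapkin s) hj (Or.inr rfl) h1 hInv
        | exact inv_insert_claim w cl lost proc j s hj (Or.inl rfl) h1 hInv
        | exact inv_insert_claim w cl lost proc j (leftNapkin s) hj (Or.inr rfl) h2 hInv
        | exact inv_insert_claim w cl lost proc j s hj (Or.inl rfl) h2 hInv
        | exact inv_lost w cl lost proc j hj h2 h1 hInv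
        | exact inv_lost w cl lost proc j hj h1 h2 hInv
        | (push_neg at h1 h2; first
            | exact inv_lost w cl lost proc j hj h2 h1 hInv
            | exact inv_lost w cl lost proc j hj h1 h2 hInv)
  · exact ⟨fun _ => none, by simp, by simp, by simp, by simp⟩

section Upper
variable [NeZero n]

lemma one_ne_zero' (hn : 2 ≤ n) : (1 : Fin n) ≠ 0 := by
  intro h
  have h1 := Fin.val_eq_of_eq h
  rw [Fin.val_one', Nat.mod_eq_of_lt (by omega), Fin.val_zero] at h1
  exact one_ne_zero h1

lemma two_ne_zero' (hn : 3 ≤ n) : (1 + 1 : Fin n) ≠ 0 := by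
  intro h
  have h1 := Fin.val_eq_of_eq h
  rw [Fin.add_def, Fin.val_one', Nat.mod_eq_of_lt (show (1:ℕ) < n by omega)] at h1
  simp only [Fin.val_zero, Fin.val_mk] at h1
  rw [Nat.mod_eq_of_lt (by omega)] at h1
  omega

lemma add_one_ne (hn : 2 ≤ n) (s : Fin n) : s + 1 ≠ s := by
  intro h
  have h' : s + 1 = s + 0 := by rw [add_zero]; exact h
  exact one_ne_zero' hn (add_left_cancel h')

lemma add_two_ne (hn : 3 ≤ n) (s : Fin n) : s + 1 + 1 ≠ s := by
  intro h
  rw [add_assoc] at h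
  have h' : s + (1 + 1) = s + 0 := by rw [add_zero]; exact h
  exact two_ne_zero' hn (add_left_cancel h')

lemma leftNapkin_add_one (s : Fin n) : leftNapkin (s + 1) = s := by
  have hn : 0 < n := Nat.pos_of_ne_zero (NeZero.ne n)
  have hs := s.isLt
  apply Fin.ext
  simp only [leftNapkin, Fin.add_def, Fin.val_one']
  rcases Nat.lt_or_ge (n:ℕ) 2 with h | h
  · interval_cases n
    omega
  · have h1 : (1 : ℕ) % n = 1 := Nat.mod_eq_of_lt (by omega)
    rw [h1, Nat.mod_add_mod]
    have heq : (s : ℕ) + 1 + (n - 1) = (s : ℕ) + n := by omega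
    rw [heq, Nat.add_mod_right, Nat.mod_eq_of_lt s.isLt]

lemma add_one_leftNapkin (s : Fin n) : leftNapkin s + 1 = s := by
  have hn : 0 < n := Nat.pos_of_ne_zero (NeZero.ne n)
  have hs := s.isLt
  apply Fin.ext
  simp only [leftNapkin, Fin.add_def, Fin.val_one']
  rcases Nat.lt_or_ge (n:ℕ) 2 with h | h
  · interval_cases n
    omega
  · have h1 : (1 : ℕ) % n = 1 := Nat.mod_eq_of_lt (by omega)
    rw [h1, Nat.mod_add_mod]
    have heq : (s : ℕ) + (n - 1) + 1 = (s : ℕ) + n := by omega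
    rw [heq, Nat.add_mod_right, Nat.mod_eq_of_lt s.isLt]

lemma leftNapkin_eq_iff {t s : Fin n} : leftNapkin t = s ↔ t = s + 1 := by
  constructor
  · intro h; rw [← h, add_one_leftNapkin]
  · intro h; rw [h, leftNapkin_add_one]

lemma leftNapkin_injective : Function.Injective (leftNapkin (n := n)) := by
  intro a b h
  have h2 := congrArg (· + 1) h
  simpa [add_one_leftNapkin] using h2

lemma card_lost_le (hn : 3 ≤ n) (σ : Fin n → Bool) (w : Equiv.Perm (Fin n)) :
    (dine σ w).2.card * 3 ≤ n := by
  classical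
  obtain ⟨f, hf1, hf2, hf3, hf4⟩ := inv_dine σ w
  set cl := (dine σ w).1 with hcl
  set lost := (dine σ w).2 with hlost
  have owner : ∀ j ∈ lost, ∃ x, f (w.symm j) = some x ∧ w.symm x = w.symm j + 1 := by
    intro j hj
    obtain ⟨_, hseat, _, hnone⟩ := hf4 j hj
    obtain ⟨x, hx⟩ := Option.isSome_iff_exists.mp ((hf1 _).mp hseat)
    rcases (hf2 _ x hx).2 with h | h
    · exfalso
      have hxj : x = j := w.symm.injective h
      subst hxj
      exact hnone _ hx
    · exact ⟨x, hx, leftNapkin_eq_iff.mp h⟩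
  have claim1 : ∀ j ∈ lost, ∀ j' ∈ lost, w.symm j' = w.symm j + 1 → False := by
    intro j hj j' hj' h
    obtain ⟨x, hx, hx2⟩ := owner j hj
    have hxj : x = j' := w.symm.injective (hx2.trans h.symm)
    subst hxj
    exact (hf4 x hj').2.2.2 _ hx
  have claim2 : ∀ j ∈ lost, ∀ j' ∈ lost, w.symm j' = w.symm j + 1 + 1 → False := by
    intro j hj j' hj' h
    obtain ⟨x, hx, hx2⟩ := owner j hj
    obtain ⟨_, _, hleft', hnone'⟩ := hf4 j' hj'
    obtain ⟨y, hy⟩ := Option.isSome_iff_exists.mp ((hf1 _).mp hleft')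
    rcases (hf2 _ y hy).2 with h' | h'
    · have hy2 : w.symm y = w.symm j + 1 := by
        rw [h', h, leftNapkin_add_one]
      have hyx : y = x := w.symm.injective (hy2.trans hx2.symm)
      subst hyx
      have heq := hf3 _ _ y hx hy
      rw [h, leftNapkin_add_one] at heq
      exact add_one_ne (by omega) (w.symm j) heq.symm
    · have hyj : y = j' := w.symm.injective (leftNapkin_injective h')
      subst hyj
      exact hnone' _ hy
  set S : Finset (Fin n) := lost.image (fun j => w.symm j) with hS
  have hScard : S.card = lost.card :=
    Finset.card_image_of_injective _ w.symm.injective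
  have hSne : ∀ s ∈ S, ∀ s' ∈ S, s' = s + 1 → False := by
    intro s hs s' hs' h
    simp only [hS, Finset.mem_image] at hs hs'
    obtain ⟨j, hj, rfl⟩ := hs
    obtain ⟨j', hj', rfl⟩ := hs'
    exact claim1 j hj j' hj' h
  have hSne2 : ∀ s ∈ S, ∀ s' ∈ S, s' = s + 1 + 1 → False := by
    intro s hs s' hs' h
    simp only [hS, Finset.mem_image] at hs hs'
    obtain ⟨j, hj, rfl⟩ := hs
    obtain ⟨j', hj', rfl⟩ := hs'
    exact claim2 j hj j' hj' h
  have htrip : ∀ s : Fin n, ({s, s + 1, s + 1 + 1} : Finset (Fin n)).card = 3 := by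
    intro s
    have h1 : s ∉ ({s+1, s+1+1} : Finset (Fin n)) := by
      simp only [Finset.mem_insert, Finset.mem_singleton]
      push_neg
      exact ⟨fun h => add_one_ne (by omega) s h.symm, fun h => add_two_ne hn s h.symm⟩
    have h2 : (s+1) ∉ ({s+1+1} : Finset (Fin n)) := by
      simp only [Finset.mem_singleton]
      exact fun h => add_one_ne (by omega) (s+1) h.symm
    rw [Finset.card_insert_of_notMem h1, Finset.card_insert_of_notMem h2,
      Finset.card_singleton]
  have hdisj : ∀ s ∈ S, ∀ s' ∈ S, s ≠ s' →
      Disjoint ({s, s+1, s+1+1} : Finset (Fin n)) {s', s'+1, s'+1+1} := by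
    intro s hs s' hs' hne
    rw [Finset.disjoint_left]
    intro x hx hx'
    simp only [Finset.mem_insert, Finset.mem_singleton] at hx hx'
    rcases hx with rfl | rfl | rfl <;> rcases hx' with h | h | h
    · exact hne h
    · exact hSne s' hs' x hs h
    · exact hSne2 s' hs' x hs h
    · exact hSne s hs s' hs' h.symm
    · exact hne (add_right_cancel h)
    · exact hSne s' hs' s hs (add_right_cancel h)
    · exact hSne2 s hs s' hs' h.symm
    · exact hSne s hs s' hs' (add_right_cancel h).symm
    · exact hne (add_right_cancel (add_right_cancel h))
  have hbi := Finset.card_biUnion (s := S)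
    (t := fun s => ({s, s+1, s+1+1} : Finset (Fin n)))
    (fun s hs s' hs' hne => hdisj s hs s' hs' hne)
  have hle : (S.biUnion fun s => ({s, s+1, s+1+1} : Finset (Fin n))).card ≤ n := by
    have h := Finset.card_le_univ (S.biUnion fun s => ({s, s+1, s+1+1} : Finset (Fin n)))
    simpa using h
  rw [hbi] at hle
  have hsum : ∑ s ∈ S, ({s, s+1, s+1+1} : Finset (Fin n)).card = S.card * 3 := by
    rw [Finset.sum_congr rfl (fun s _ => htrip s), Finset.sum_const, smul_eq_mul]
  rw [hsum, hScard] at hle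
  exact hle

end Upper


def gval (n i : ℕ) : ℕ :=
  if i < 3*(n/3) then (if i%3=0 then i else if i%3=1 then i+1 else i-1) else i

lemma gval_lt {i : ℕ} (h : i < n) : gval n i < n := by
  unfold gval; split_ifs <;> omega

lemma gval_invol {i : ℕ} (h : i < n) : gval n (gval n i) = i := by
  unfold gval; split_ifs <;> omega

def gperm (n : ℕ) : Equiv.Perm (Fin n) where
  toFun i := ⟨gval n i.1, gval_lt i.2⟩
  invFun i := ⟨gval n i.1, gval_lt i.2⟩
  left_inv i := Fin.ext (gval_invol i.2)
  right_inv i := Fin.ext (gval_invol i.2)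

lemma gperm_symm (j : Fin n) : (gperm n).symm j = ⟨gval n j.1, gval_lt j.2⟩ := rfl

def Ck (n k : ℕ) : Finset (Fin n) :=
  Finset.univ.filter (fun m => (m:ℕ) < k ∧ (m:ℕ) % 3 ≠ 2)

def Lk (n k : ℕ) : Finset (Fin n) :=
  Finset.univ.filter (fun m => (m:ℕ) < k ∧ (m:ℕ) % 3 = 2)

lemma sim (hn : 1 ≤ n) (σ : Fin n → Bool)
    (hσ : ∀ j : Fin n, σ j = if (j : ℕ) % 3 = 1 then false else true) :
    ∀ k, k ≤ n →
      ((List.finRange n).take k).foldl (step σ (gperm n)) (∅, ∅) = (Ck n k, Lk n k) := by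
  intro k
  induction k with
  | zero =>
    intro _
    simp only [List.take_zero, List.foldl_nil]
    refine Prod.ext ?_ ?_ <;> simp [Ck, Lk]
  | succ k ih =>
    intro hk1
    have hk : k < n := hk1
    have htake : (List.finRange n).take (k+1) =
        (List.finRange n).take k ++ [⟨k, hk⟩] := by
      rw [List.take_succ]
      congr 1
      rw [List.getElem?_eq_getElem (by simpa using hk)]
      simp [List.getElem_finRange]
    rw [htake, List.foldl_append, ih (le_of_lt hk)]
    simp only [List.foldl_cons, List.foldl_nil]
    -- now compute one step
    have hσk : σ ⟨k, hk⟩ = if k % 3 = 1 then false else true := hσ _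
    have hsymm : (gperm n).symm ⟨k, hk⟩ = ⟨gval n k, gval_lt hk⟩ := rfl
    have h3 : k % 3 = 0 ∨ k % 3 = 1 ∨ k % 3 = 2 := by omega
    have hCk : ∀ (h3' : k % 3 ≠ 2), insert (⟨k, hk⟩ : Fin n) (Ck n k) = Ck n (k+1) := by
      intro h3'
      ext m
      simp only [Ck, Finset.mem_insert, Finset.mem_filter, Finset.mem_univ, true_and,
        Fin.ext_iff, Fin.val_mk]
      omega
    have hLk : ∀ (h3' : k % 3 ≠ 2), Lk n k = Lk n (k+1) := by
      intro h3'
      ext m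
      simp only [Lk, Finset.mem_filter, Finset.mem_univ, true_and]
      omega
    have hCk2 : k % 3 = 2 → Ck n k = Ck n (k+1) := by
      intro h3'
      ext m
      simp only [Ck, Finset.mem_filter, Finset.mem_univ, true_and]
      omega
    have hLk2 : ∀ (h3' : k % 3 = 2), insert (⟨k, hk⟩ : Fin n) (Lk n k) = Lk n (k+1) := by
      intro h3'
      ext m
      simp only [Lk, Finset.mem_insert, Finset.mem_filter, Finset.mem_univ, true_and,
        Fin.ext_iff, Fin.val_mk]
      omega
    rcases h3 with h3 | h3 | h3
    · -- k % 3 = 0 : diner k sits at seat k, takes right napkin k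
      have hs : (gperm n).symm ⟨k, hk⟩ = ⟨k, hk⟩ := by
        rw [hsymm]; exact Fin.ext (by unfold gval; split_ifs <;> omega)
      have hσk' : σ ⟨k, hk⟩ = true := by rw [hσk, if_neg (by omega)]
      have hmem : (⟨k, hk⟩ : Fin n) ∉ Ck n k := by simp [Ck]
      simp only [step, hs, hσk', if_true]
      rw [if_pos hmem, hCk (by omega), hLk (by omega)]
    · -- k % 3 = 1
      have hσk' : σ ⟨k, hk⟩ = false := by rw [hσk, if_pos h3]
      rcases Nat.lt_or_ge k (3*(n/3)) with hlt | hge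
      · -- seat k+1, takes left napkin k
        have hk1n : k + 1 < n := by omega
        have hs : (gperm n).symm ⟨k, hk⟩ = ⟨k + 1, hk1n⟩ := by
          rw [hsymm]; exact Fin.ext (by unfold gval; split_ifs <;> omega)
        have hleft : leftNapkin (⟨k + 1, hk1n⟩ : Fin n) = ⟨k, hk⟩ := by
          apply Fin.ext
          simp only [leftNapkin, Fin.val_mk]
          have heq : k + 1 + (n - 1) = k + n := by omega
          rw [heq, Nat.add_mod_right, Nat.mod_eq_of_lt hk]
        have hmem : (⟨k, hk⟩ : Fin n) ∉ Ck n k := by simp [Ck]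
        simp only [step, hs, hσk', Bool.false_eq_true, if_false, hleft]
        rw [if_pos hmem, hCk (by omega), hLk (by omega)]
      · -- tail: seat k, prefers left napkin k-1 (claimed), takes right napkin k
        have hs : (gperm n).symm ⟨k, hk⟩ = ⟨k, hk⟩ := by
          rw [hsymm]; exact Fin.ext (by unfold gval; split_ifs <;> omega)
        have hk1' : 1 ≤ k := by omega
        have hleft : leftNapkin (⟨k, hk⟩ : Fin n) = ⟨k - 1, by omega⟩ := by
          apply Fin.ext
          simp only [leftNapkin, Fin.val_mk]
          have heq : k + (n - 1) = (k - 1) + n := by omega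
          rw [heq, Nat.add_mod_right, Nat.mod_eq_of_lt (by omega)]
        have hmem1 : (⟨k - 1, by omega⟩ : Fin n) ∈ Ck n k := by
          simp only [Ck, Finset.mem_filter, Finset.mem_univ, true_and, Fin.val_mk]
          omega
        have hmem2 : (⟨k, hk⟩ : Fin n) ∉ Ck n k := by simp [Ck]
        simp only [step, hs, hσk', Bool.false_eq_true, if_false, hleft]
        rw [if_neg (not_not_intro hmem1), if_pos hmem2, hCk (by omega), hLk (by omega)]
    · -- k % 3 = 2 : seat k-1, both napkins k-1 and k-2 claimed, napkinless
      have hklt : k < 3 * (n / 3) := by omega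
      have hσk' : σ ⟨k, hk⟩ = true := by rw [hσk, if_neg (by omega)]
      have hs : (gperm n).symm ⟨k, hk⟩ = ⟨k - 1, by omega⟩ := by
        rw [hsymm]; exact Fin.ext (by unfold gval; split_ifs <;> omega)
      have hleft : leftNapkin (⟨k - 1, by omega⟩ : Fin n) = ⟨k - 2, by omega⟩ := by
        apply Fin.ext
        simp only [leftNapkin, Fin.val_mk]
        have heq : k - 1 + (n - 1) = (k - 2) + n := by omega
        rw [heq, Nat.add_mod_right, Nat.mod_eq_of_lt (by omega)]
      have hmem1 : (⟨k - 1, by omega⟩ : Fin n) ∈ Ck n k := by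
        simp only [Ck, Finset.mem_filter, Finset.mem_univ, true_and, Fin.val_mk]
        omega
      have hmem2 : (⟨k - 2, by omega⟩ : Fin n) ∈ Ck n k := by
        simp only [Ck, Finset.mem_filter, Finset.mem_univ, true_and, Fin.val_mk]
        omega
      simp only [step, hs, hσk', if_true, hleft]
      rw [if_neg (not_not_intro hmem1), if_neg (not_not_intro hmem2),
        hCk2 (by omega), hLk2 (by omega)]



lemma dine_gperm (hn : 1 ≤ n) (σ : Fin n → Bool)
    (hσ : ∀ j : Fin n, σ j = if (j : ℕ) % 3 = 1 then false else true) :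
    dine σ (gperm n) = (Ck n n, Lk n n) := by
  rw [dine_eq_foldl]
  have h := sim hn σ hσ n le_rfl
  rwa [List.take_of_length_le (by simp)] at h

lemma card_Lk (n : ℕ) : (Lk n n).card = n / 3 := by
  rw [← count_mod3 n]
  apply Finset.card_bij (fun (m : Fin n) _ => (m : ℕ))
  · intro a ha
    have := a.isLt
    simp only [Lk, Finset.mem_filter, Finset.mem_univ, true_and] at ha
    simp only [Finset.mem_filter, Finset.mem_range]
    omega
  · intro a _ b _ h
    exact Fin.ext h
  · intro b hb
    simp only [Finset.mem_filter, Finset.mem_range] at hb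
    refine ⟨⟨b, hb.1⟩, ?_, rfl⟩
    simp only [Lk, Finset.mem_filter, Finset.mem_univ, true_and, Fin.val_mk]
    omega


/-- For the preference order repeating the pattern `(1,-1,1)` (1-based
diner `j` is negative iff `j ≡ 2 (mod 3)`, i.e. 0-based `j ≡ 1 (mod 3)`),
`ν_max(σ) = ⌊n/3⌋`, and the seating order `(1,3,2,4,6,5,…)` yields napkinless diners
exactly in the (1-based) seats `{2, 5, …, 3⌊n/3⌋ - 1}`, i.e. the 0-based seats `s`
with `s ≡ 1 (mod 3)` and `s < 3⌊n/3⌋`. -/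
theorem statement3 (n : ℕ) (hn : 1 ≤ n)
    (σ : Fin n → Bool) (hσ : ∀ j : Fin n, σ j = if (j : ℕ) % 3 = 1 then false else true) :
    nuMax σ = n / 3 ∧
    ∃ w : Equiv.Perm (Fin n),
      (∀ i : Fin n, (w i : ℕ) =
        if (i : ℕ) < 3 * (n / 3) then
          (if (i : ℕ) % 3 = 0 then (i : ℕ)
           else if (i : ℕ) % 3 = 1 then (i : ℕ) + 1
           else (i : ℕ) - 1)
        else (i : ℕ)) ∧
      IsSeating w ∧
      (∀ j : Fin n, j ∈ napkinless σ w ↔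
        ((w.symm j : ℕ) % 3 = 1 ∧ (w.symm j : ℕ) < 3 * (n / 3))) := by
  have hσ' : σ = fun j : Fin n => if (j : ℕ) % 3 = 1 then false else true := funext hσ
  subst hσ'
  by_cases h3 : n < 3
  · interval_cases n
    · exact ⟨by decide, by decide⟩
    · exact ⟨by decide, by decide⟩
  · haveI : NeZero n := ⟨by omega⟩
    have hdine : dine _ (gperm n) = (Ck n n, Lk n n) :=
      dine_gperm hn _ (fun j => rfl)
    have hnu : nu (fun j : Fin n => if (j : ℕ) % 3 = 1 then false else true) (gperm n)
        = n / 3 := by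
      unfold nu napkinless
      rw [hdine]
      exact card_Lk n
    have hseat : IsSeating (gperm n) := by
      intro i h0
      show gval n (i : ℕ) = 0
      rw [h0]
      unfold gval
      split_ifs <;> omega
    constructor
    · apply le_antisymm
      · apply Finset.sup_le
        intro w _
        have hc := card_lost_le (by omega)
          (fun j : Fin n => if (j : ℕ) % 3 = 1 then false else true) w
        rw [Nat.le_div_iff_mul_le (by norm_num)]
        exact hc
      · rw [← hnu]
        exact Finset.le_sup (Finset.mem_filter.mpr ⟨Finset.mem_univ _, hseat⟩)
    · refine ⟨gperm n, fun i => rfl, hseat, ?_⟩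
      intro j
      show j ∈ (dine _ (gperm n)).2 ↔ _
      rw [hdine]
      have hj := j.isLt
      simp only [Lk, Finset.mem_filter, Finset.mem_univ, true_and, gperm_symm, Fin.val_mk]
      unfold gval
      split_ifs <;> omega




end Napkin
end
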